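/- arXiv:1710.01787 — 2 statements merged into one kernel-verified Lean document; each statement's English description precedes it below -/
import Mathlib

section
/- Let X_0, ..., X_{N-1} be random vectors in ℝⁿ on a probability space, and let 𝒦 ⊆ ℝⁿ be a convex set such that for every K ∈ 𝒦 and almost every sample point, 1 + ⟨K, X_i⟩ > 0 for all i, and such that L(K) := min over 0 ≤ l ≤ k ≤ N of Σ_{i=l}^{k-1} log(1 + ⟨K, X_i⟩) is integrable for every K ∈ 𝒦. Then for every ε with 0 < ε < 1, the set { K ∈ 𝒦 : E[L(K)] ≥ log(1 − ε) } is convex. -/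
open MeasureTheory

/-- The surrogate drawdown constraint set
`{K ∈ 𝒦 : E[log D̄(K)] ≥ log(1-ε)}` is convex, where `log D̄(K)` is the
minimum `min_{0 ≤ l ≤ k ≤ N} Σ_{i=l}^{k-1} log(1 + ⟨K, X i⟩)` of block sums of
log-returns. -/
theorem surrogate_drawdown_constraint_convex
    (n N : ℕ) {Ω : Type*} [MeasurableSpace Ω] (μ : Measure Ω)
    [IsProbabilityMeasure μ] (X : ℕ → Ω → Fin n → ℝ)
    (𝒦 : Set (Fin n → ℝ)) (h𝒦 : Convex ℝ 𝒦)
    (L : (Fin n → ℝ) → Ω → ℝ)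
    (hL : ∀ K ω, L K ω =
      ((Finset.range (N+1) ×ˢ Finset.range (N+1)).filter
          (fun p : ℕ × ℕ => p.1 ≤ p.2)).inf'
        ⟨(0, 0), by simp⟩
        (fun p : ℕ × ℕ =>
          ∑ i ∈ Finset.Ico p.1 p.2, Real.log (1 + ∑ j, K j * X i ω j)))
    (hpos : ∀ K ∈ 𝒦, ∀ᵐ ω ∂μ, ∀ i < N, 0 < 1 + ∑ j, K j * X i ω j)
    (hint : ∀ K ∈ 𝒦, Integrable (L K) μ)
    (ε : ℝ) (hε₀ : 0 < ε) (hε₁ : ε < 1) :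
    Convex ℝ {K ∈ 𝒦 | Real.log (1 - ε) ≤ ∫ ω, L K ω ∂μ} := by
  intro K₁ hK₁ K₂ hK₂ a b ha hb hab
  have hmem : a • K₁ + b • K₂ ∈ 𝒦 := h𝒦 hK₁.1 hK₂.1 ha hb hab
  refine ⟨hmem, ?_⟩
  have hae : ∀ᵐ ω ∂μ, a * L K₁ ω + b * L K₂ ω ≤ L (a • K₁ + b • K₂) ω := by
    filter_upwards [hpos K₁ hK₁.1, hpos K₂ hK₂.1] with ω h1 h2
    rw [hL, hL, hL]
    apply Finset.le_inf'
    intro p hp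
    have hp2 : p.2 ≤ N := by
      simp only [Finset.mem_filter, Finset.mem_product, Finset.mem_range] at hp
      omega
    have step1 : ∀ (K : Fin n → ℝ),
        a * (((Finset.range (N+1) ×ˢ Finset.range (N+1)).filter
          (fun p : ℕ × ℕ => p.1 ≤ p.2)).inf' ⟨(0, 0), by simp⟩
          (fun p : ℕ × ℕ =>
            ∑ i ∈ Finset.Ico p.1 p.2, Real.log (1 + ∑ j, K j * X i ω j)))
        ≤ a * ∑ i ∈ Finset.Ico p.1 p.2, Real.log (1 + ∑ j, K j * X i ω j) := by
      intro K
      exact mul_le_mul_of_nonneg_left (Finset.inf'_le _ hp) ha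
    have step1' : ∀ (K : Fin n → ℝ),
        b * (((Finset.range (N+1) ×ˢ Finset.range (N+1)).filter
          (fun p : ℕ × ℕ => p.1 ≤ p.2)).inf' ⟨(0, 0), by simp⟩
          (fun p : ℕ × ℕ =>
            ∑ i ∈ Finset.Ico p.1 p.2, Real.log (1 + ∑ j, K j * X i ω j)))
        ≤ b * ∑ i ∈ Finset.Ico p.1 p.2, Real.log (1 + ∑ j, K j * X i ω j) := by
      intro K
      exact mul_le_mul_of_nonneg_left (Finset.inf'_le _ hp) hb
    refine le_trans (add_le_add (step1 K₁) (step1' K₂)) ?_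
    rw [Finset.mul_sum, Finset.mul_sum, ← Finset.sum_add_distrib]
    refine Finset.sum_le_sum fun i hi => ?_
    have hiN : i < N := lt_of_lt_of_le (Finset.mem_Ico.mp hi).2 hp2
    have hx : (1 + ∑ j, K₁ j * X i ω j) ∈ Set.Ioi (0:ℝ) := h1 i hiN
    have hy : (1 + ∑ j, K₂ j * X i ω j) ∈ Set.Ioi (0:ℝ) := h2 i hiN
    have hconc := strictConcaveOn_log_Ioi.concaveOn.2 hx hy ha hb hab
    simp only [smul_eq_mul] at hconc
    refine le_trans hconc (le_of_eq ?_)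
    congr 1
    have : ∀ j, (a • K₁ + b • K₂) j * X i ω j
        = a * (K₁ j * X i ω j) + b * (K₂ j * X i ω j) := by
      intro j
      simp [Pi.add_apply, Pi.smul_apply, smul_eq_mul]
      ring
    rw [Finset.sum_congr rfl fun j _ => this j, Finset.sum_add_distrib,
      ← Finset.mul_sum, ← Finset.mul_sum]
    have h1 : a * (1 + ∑ j, K₁ j * X i ω j) + b * (1 + ∑ j, K₂ j * X i ω j)
        = (a + b) + (a * ∑ j, K₁ j * X i ω j + b * ∑ j, K₂ j * X i ω j) := by
      ring
    rw [h1, hab]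
  have hint₁ := (hint K₁ hK₁.1).const_mul a
  have hint₂ := (hint K₂ hK₂.1).const_mul b
  have hIneq : ∫ ω, (a * L K₁ ω + b * L K₂ ω) ∂μ
      ≤ ∫ ω, L (a • K₁ + b • K₂) ω ∂μ :=
    integral_mono_ae (hint₁.add hint₂) (hint _ hmem) hae
  have hsplit : ∫ ω, (a * L K₁ ω + b * L K₂ ω) ∂μ
      = a * ∫ ω, L K₁ ω ∂μ + b * ∫ ω, L K₂ ω ∂μ := by
    rw [integral_add hint₁ hint₂, integral_const_mul, integral_const_mul]
  have : Real.log (1 - ε) = a * Real.log (1 - ε) + b * Real.log (1 - ε) := by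
    rw [← add_mul, hab, one_mul]
  rw [this]
  refine le_trans (add_le_add (mul_le_mul_of_nonneg_left hK₁.2 ha)
    (mul_le_mul_of_nonneg_left hK₂.2 hb)) ?_
  rw [← hsplit]
  exact hIneq
end

section
/- Fix p with 0 < p < 1 and define κ(γ) = (pγ + p − 1)/(pγ² − p + 1) and γ*(p) = (1 − p + √(1 − p))/p. Then κ is strictly decreasing on the interval (γ*(p), ∞): for all γ*(p) < γ₁ < γ₂ we have κ(γ₂) < κ(γ₁). -/
/-- For `0 < p < 1`, the Taylor-approximation Kelly fraction
`κ(γ) = (pγ + p - 1)/(pγ² - p + 1)` is strictly decreasing on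
`(γ*(p), ∞)`, where `γ*(p) = (1 - p + √(1-p))/p`. -/
theorem taylor_kelly_fraction_strict_anti
    (p : ℝ) (hp₀ : 0 < p) (hp₁ : p < 1) (κ : ℝ → ℝ)
    (hκ : ∀ γ, κ γ = (p * γ + p - 1) / (p * γ^2 - p + 1)) :
    ∀ γ₁ γ₂ : ℝ, (1 - p + Real.sqrt (1 - p)) / p < γ₁ → γ₁ < γ₂ →
      κ γ₂ < κ γ₁ := by
  intro γ₁ γ₂ h₁ h₁₂
  set q := Real.sqrt (1 - p) with hq
  have hq0 : 0 < q := Real.sqrt_pos.mpr (by linarith)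
  have hq2 : q ^ 2 = 1 - p := Real.sq_sqrt (by linarith)
  have hq1 : q < 1 := by nlinarith
  have hg1 : q ^ 2 + q < p * γ₁ := by
    rw [div_lt_iff₀ hp₀] at h₁; nlinarith
  have hg2 : q ^ 2 + q < p * γ₂ := by nlinarith
  have hd1 : 0 < p * γ₁ ^ 2 - p + 1 := by nlinarith [sq_nonneg γ₁]
  have hd2 : 0 < p * γ₂ ^ 2 - p + 1 := by nlinarith [sq_nonneg γ₂]
  rw [hκ, hκ, div_lt_div_iff₀ hd2 hd1]
  have key : q ^ 2 * (1 + γ₁ + γ₂) < p * (γ₁ * γ₂) := by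
    nlinarith [mul_pos (sub_pos.mpr hg1) (sub_pos.mpr hg2),
      mul_pos hq0 (sub_pos.mpr hg2), mul_pos hq0 (sub_pos.mpr hg1),
      mul_pos (mul_pos hq0 hq0) (sub_pos.mpr hg2)]
  nlinarith [mul_pos hp₀ (sub_pos.mpr h₁₂),
    mul_pos (mul_pos hp₀ (sub_pos.mpr h₁₂)) (sub_pos.mpr key)]
end
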